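/- arXiv:2207.07708 — 6 statements merged into one kernel-verified Lean document; each statement's English description precedes it below -/
import Mathlib

section
/- Let G be a graph, P a partition of V(G) such that the quotient trigraph G/P has no red edges, H the quotient graph, and b : V(G) → ℕ⁺ a demand function. Define Γ(P_i) := χ_{b|P_i}(G[P_i]) for each part P_i. Then χ_Γ(H) ≤ χ_b(G). -/
/-- The optimum of the Set Coloring problem on (G, b). -/
noncomputable def setChromatic {V : Type*} (G : SimpleGraph V) (b : V → ℕ) : ℕ :=
  sInf {k : ℕ | ∃ S : V → Finset ℕ,
    (∀ v, b v ≤ (S v).card) ∧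
    (∀ u v, G.Adj u v → Disjoint (S u) (S v)) ∧
    Set.ncard (⋃ v, (S v : Set ℕ)) = k}

open Classical in
lemma setChromatic_nonempty {V : Type*} [Fintype V] (G : SimpleGraph V) (b : V → ℕ) :
    {k : ℕ | ∃ S : V → Finset ℕ,
    (∀ v, b v ≤ (S v).card) ∧
    (∀ u v, G.Adj u v → Disjoint (S u) (S v)) ∧
    Set.ncard (⋃ v, (S v : Set ℕ)) = k}.Nonempty := by
  classical
  set e := Fintype.equivFin V
  set B := Finset.univ.sup b + 1 with hB
  have hbB : ∀ v, b v < B := fun v => Nat.lt_succ_of_le (Finset.le_sup (Finset.mem_univ v))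
  set S : V → Finset ℕ := fun v => (Finset.range (b v)).image (fun t => B * (e v) + t) with hS
  have hdiv : ∀ v a, a ∈ S v → a / B = e v := by
    intro v a ha
    simp only [hS, Finset.mem_image, Finset.mem_range] at ha
    obtain ⟨t, ht, rfl⟩ := ha
    rw [Nat.mul_add_div (by omega), Nat.div_eq_of_lt (by have := hbB v; omega)]
    omega
  refine ⟨_, S, ?_, ?_, rfl⟩
  · intro v
    rw [hS]
    rw [Finset.card_image_of_injective _ (add_right_injective _), Finset.card_range]
  · intro u v huv
    rw [Finset.disjoint_left]
    intro a hau hav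
    have h1 := hdiv u a hau
    have h2 := hdiv v a hav
    exact G.ne_of_adj huv (e.injective (by omega))


/-- For a module partition P of G (quotient trigraph without red edges) with
quotient graph H, and Γ(P_i) := χ_{b|P_i}(G[P_i]), one has χ_Γ(H) ≤ χ_b(G). -/
theorem stmt4 {V ι : Type*} [Fintype V] [Fintype ι]
    (G : SimpleGraph V) (b : V → ℕ) (hb : ∀ v, 0 < b v)
    (P : V → ι) (hsurj : Function.Surjective P)
    (hmod : ∀ i j : ι, i ≠ j →
      (∀ u v : V, P u = i → P v = j → G.Adj u v) ∨
      (∀ u v : V, P u = i → P v = j → ¬ G.Adj u v))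
    (H : SimpleGraph ι)
    (hH : ∀ i j : ι, H.Adj i j ↔ i ≠ j ∧ ∀ u v : V, P u = i → P v = j → G.Adj u v)
    (Γ : ι → ℕ)
    (hΓ : ∀ i : ι, Γ i = setChromatic (G.induce {v | P v = i}) (fun v => b v.1)) :
    setChromatic H Γ ≤ setChromatic G b := by
  classical
  have hmem := Nat.sInf_mem (setChromatic_nonempty G b)
  obtain ⟨S, hcard, hdisj, hk⟩ := hmem
  set T : ι → Finset ℕ := fun i => Finset.univ.biUnion (fun v : V => if P v = i then S v else ∅)
    with hT
  have hTmem : ∀ i a, a ∈ T i ↔ ∃ v, P v = i ∧ a ∈ S v := by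
    intro i a
    simp only [hT, Finset.mem_biUnion, Finset.mem_univ, true_and]
    constructor
    · rintro ⟨v, hv⟩
      by_cases h : P v = i
      · exact ⟨v, h, by simpa [h] using hv⟩
      · simp [h] at hv
    · rintro ⟨v, h1, h2⟩
      exact ⟨v, by simp [h1, h2]⟩
  apply Nat.sInf_le
  refine ⟨T, ?_, ?_, ?_⟩
  · intro i
    rw [hΓ i]
    apply Nat.sInf_le
    refine ⟨fun v => S v.1, fun v => hcard v.1, ?_, ?_⟩
    · intro u v huv
      exact hdisj u.1 v.1 huv
    · rw [← Set.ncard_coe_finset]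
      congr 1
      ext a
      simp only [Set.mem_iUnion, Finset.coe_mem, Finset.mem_coe, hTmem i a]
      constructor
      · rintro ⟨⟨v, hv⟩, h⟩
        exact ⟨v, hv, h⟩
      · rintro ⟨v, h1, h2⟩
        exact ⟨⟨v, h1⟩, h2⟩
  · intro i j hij
    rw [Finset.disjoint_left]
    intro a hai haj
    obtain ⟨u, hu, hau⟩ := (hTmem i a).1 hai
    obtain ⟨v, hv, hav⟩ := (hTmem j a).1 haj
    obtain ⟨-, hadj⟩ := (hH i j).1 hij
    exact Finset.disjoint_left.1 (hdisj u v (hadj u v hu hv)) hau hav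
  · rw [setChromatic, ← hk]
    congr 1
    ext a
    simp only [Set.mem_iUnion, Finset.mem_coe]
    constructor
    · rintro ⟨i, h⟩
      obtain ⟨v, -, hv⟩ := (hTmem i a).1 h
      exact ⟨v, hv⟩
    · rintro ⟨v, h⟩
      exact ⟨P v, (hTmem _ a).2 ⟨v, rfl, h⟩⟩
end

section
/- Let G be a graph, P a partition of V(G) such that any two distinct parts are either fully adjacent or fully non-adjacent, and H the quotient graph. Given a Set Coloring solution c_H for (H, b') (where b'(P_i) is the number of colors of a Set Coloring solution c_{P_i} of (G[P_i], b|_{P_i})), the combined assignment mapping each v ∈ P_i to the image of c_{P_i}(v) under any injection from [b'(P_i)] into c_H(P_i) is a feasible Set Coloring solution for (G, b) using at most |⋃_{P_i} c_H(P_i)| colors. -/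
/-- Combining Set Coloring solutions of the parts of a module partition with
a Set Coloring solution of the quotient graph (via injections of the part palettes into the
quotient color sets) yields a feasible Set Coloring solution for (G, b) using at most
|⋃_{P_i} c_H(P_i)| colors. -/
theorem stmt5 {V ι : Type*} [Fintype V] [Fintype ι]
    (G : SimpleGraph V) (b : V → ℕ) (hb : ∀ v, 0 < b v)
    (P : V → ι)
    (hmod : ∀ i j : ι, i ≠ j →
      (∀ u v : V, P u = i → P v = j → G.Adj u v) ∨
      (∀ u v : V, P u = i → P v = j → ¬ G.Adj u v))
    (b' : ι → ℕ)
    (cP : V → Finset ℕ)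
    -- each part's solution uses exactly the palette [b'(P_i)]
    (hcP1 : ∀ v, cP v ⊆ Finset.range (b' (P v)))
    (hcP2 : ∀ v, b v ≤ (cP v).card)
    (hcP3 : ∀ u v, P u = P v → G.Adj u v → Disjoint (cP u) (cP v))
    (cH : ι → Finset ℕ)
    (hcH1 : ∀ i, b' i ≤ (cH i).card)
    -- c_H is feasible on the quotient graph H (fully adjacent parts get disjoint sets)
    (hcH2 : ∀ i j : ι, i ≠ j → (∀ u v : V, P u = i → P v = j → G.Adj u v) →
      Disjoint (cH i) (cH j))
    (τ : ι → ℕ → ℕ)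
    (hτinj : ∀ i, Set.InjOn (τ i) ↑(Finset.range (b' i)))
    (hτmem : ∀ i, ∀ x ∈ Finset.range (b' i), τ i x ∈ cH i) :
    (∀ v, b v ≤ ((cP v).image (τ (P v))).card) ∧
    (∀ u v, G.Adj u v → Disjoint ((cP u).image (τ (P u))) ((cP v).image (τ (P v)))) ∧
    (Finset.univ.biUnion (fun v : V => (cP v).image (τ (P v)))).card ≤
      (Finset.univ.biUnion (fun i : ι => cH i)).card := by
  refine ⟨?_, ?_, ?_⟩
  · intro v
    rw [Finset.card_image_of_injOn ((hτinj (P v)).mono (by exact_mod_cast hcP1 v))]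
    exact hcP2 v
  · intro u v huv
    by_cases h : P u = P v
    · rw [Finset.disjoint_left]
      intro a ha hb'
      obtain ⟨x, hx, rfl⟩ := Finset.mem_image.mp ha
      obtain ⟨y, hy, hxy⟩ := Finset.mem_image.mp hb'
      have hxy' : τ (P v) y = τ (P u) x := hxy
      rw [h] at hxy'
      have := (hτinj (P v)) (by exact_mod_cast hcP1 v hy)
        (by rw [← h]; exact_mod_cast hcP1 u hx) hxy'
      subst this
      exact Finset.disjoint_left.mp (hcP3 u v h huv) hx hy
    · rcases hmod (P u) (P v) h with hadj | hnadj
      · refine Finset.disjoint_left.mpr ?_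
        intro a ha hb'
        obtain ⟨x, hx, rfl⟩ := Finset.mem_image.mp ha
        obtain ⟨y, hy, hxy⟩ := Finset.mem_image.mp hb'
        exact Finset.disjoint_left.mp (hcH2 _ _ h hadj)
          (hτmem _ x (hcP1 u hx)) (hxy ▸ hτmem _ y (hcP1 v hy))
      · exact absurd huv (hnadj u v rfl rfl)
  · apply Finset.card_le_card
    intro a ha
    rw [Finset.mem_biUnion] at ha ⊢
    obtain ⟨v, -, hv⟩ := ha
    obtain ⟨x, hx, rfl⟩ := Finset.mem_image.mp hv
    exact ⟨P v, Finset.mem_univ _, hτmem _ x (hcP1 v hx)⟩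
end

section
/- Let G be a graph, P a vertex partition of G, and suppose M is an induced matching of G such that every edge of M has both endpoints in a single part of P. Let C be a union of parts of P such that the quotient trigraph (G/P) restricted to the parts inside C has no red edges. For each part P_i ⊆ C, let S_i be a maximum induced matching of G[P_i], and let I be an independent set of the quotient graph on the parts inside C. Then ⋃_{P_i ∈ I} S_i is an induced matching of G. -/
/-- A set of edges of G is an induced matching: edges of G, pairwise sharing no endpoint,
and no edge of G joins endpoints of two distinct edges of the set. -/
def IsInducedMatching {V : Type*} (G : SimpleGraph V) (M : Finset (Sym2 V)) : Prop :=
  (∀ e ∈ M, e ∈ G.edgeSet) ∧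
  ∀ e ∈ M, ∀ f ∈ M, e ≠ f → ∀ a ∈ e, ∀ b ∈ f, a ≠ b ∧ ¬ G.Adj a b

/-- If the quotient trigraph restricted to the parts inside C has no red
edges, S_i is a maximum induced matching of G[P_i] for each part, and I is an independent
set of the quotient graph on the parts inside C, then ⋃_{P_i ∈ I} S_i is an induced
matching of G. -/
theorem stmt7 {V ι : Type*} [DecidableEq V] (G : SimpleGraph V)
    (P : V → ι) (C : Set ι)
    (hnored : ∀ i ∈ C, ∀ j ∈ C, i ≠ j →
      (∀ u v : V, P u = i → P v = j → G.Adj u v) ∨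
      (∀ u v : V, P u = i → P v = j → ¬ G.Adj u v))
    (S : ι → Finset (Sym2 V))
    (hS : ∀ i ∈ C, IsInducedMatching G (S i) ∧ ∀ e ∈ S i, ∀ a ∈ e, P a = i)
    (hSmax : ∀ i ∈ C, ∀ M : Finset (Sym2 V),
      IsInducedMatching G M → (∀ e ∈ M, ∀ a ∈ e, P a = i) → M.card ≤ (S i).card)
    (I : Finset ι) (hIC : ∀ i ∈ I, i ∈ C)
    (hI : ∀ i ∈ I, ∀ j ∈ I, i ≠ j → ¬ (∀ u v : V, P u = i → P v = j → G.Adj u v)) :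
    IsInducedMatching G (I.biUnion S) := by
  constructor
  · intro e he
    obtain ⟨i, hiI, hei⟩ := Finset.mem_biUnion.mp he
    exact ((hS i (hIC i hiI)).1).1 e hei
  · intro e he f hf hef a ha b hb
    obtain ⟨i, hiI, hei⟩ := Finset.mem_biUnion.mp he
    obtain ⟨j, hjI, hfj⟩ := Finset.mem_biUnion.mp hf
    have hPa : P a = i := (hS i (hIC i hiI)).2 e hei a ha
    have hPb : P b = j := (hS j (hIC j hjI)).2 f hfj b hb
    by_cases hij : i = j
    · subst hij
      exact ((hS i (hIC i hiI)).1).2 e hei f hfj hef a ha b hb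
    · have hnadj : ∀ u v : V, P u = i → P v = j → ¬ G.Adj u v := by
        rcases hnored i (hIC i hiI) j (hIC j hjI) hij with h | h
        · exact absurd h (hI i hiI j hjI hij)
        · exact h
      refine ⟨fun h => hij (by rw [← hPa, h, hPb]), hnadj a b hPa hPb⟩
end

section
/- Let T be a tree. The edge set of T can be partitioned into at most 3 classes, each of which is a disjoint union of stars that are pairwise at distance at least 2 in T (i.e., no two stars of the same class share a vertex or are joined by an edge of T). -/
open SimpleGraph

/-- The edge set of any tree T can be partitioned into at most 3 classes,
each of which is a disjoint union of stars that are pairwise mutually induced in T: two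
distinct edges of a common class either share the same star center, or share no endpoint
and have no edge of T joining their endpoints. -/
theorem stmt14 {V : Type*} [Fintype V] (T : SimpleGraph V) (hT : T.IsTree) :
    ∃ (c : Sym2 V → Fin 3) (center : Sym2 V → V),
      (∀ e ∈ T.edgeSet, center e ∈ e) ∧
      (∀ e ∈ T.edgeSet, ∀ f ∈ T.edgeSet, e ≠ f → c e = c f →
        (center e = center f ∨ ∀ a ∈ e, ∀ b ∈ f, a ≠ b ∧ ¬ T.Adj a b)) := by
  classical
  obtain ⟨r⟩ := hT.isConnected.nonempty
  -- (A) adjacent vertices have different distances to the root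
  have hA : ∀ a b : V, T.Adj a b → T.dist r a ≠ T.dist r b := by
    intro a b hab heq
    obtain ⟨p, hp, hlp⟩ := hT.isConnected.exists_path_of_dist r a
    by_cases hb : b ∈ p.support
    · have h1 : (p.takeUntil b hb).length + (p.dropUntil b hb).length = p.length := by
        rw [← Walk.length_append, p.take_spec hb]
      have h2 : T.dist r b ≤ (p.takeUntil b hb).length := dist_le _
      have h3 : T.dist b a ≤ (p.dropUntil b hb).length := dist_le _
      have h4 : T.dist b a = 1 := dist_eq_one_iff_adj.mpr hab.symm
      omega
    · have hw : (p.concat hab).IsPath := by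
        rw [Walk.isPath_def, Walk.support_concat]
        simpa [List.concat_eq_append, List.nodup_append] using ⟨hp.support_nodup, fun x hx hxb => hb (hxb ▸ hx)⟩
      obtain ⟨q, hq, hlq⟩ := hT.isConnected.exists_path_of_dist r b
      have heq2 : p.concat hab = q := (hT.existsUnique_path r b).unique hw hq
      have hlen : (p.concat hab).length = q.length := by rw [heq2]
      rw [Walk.length_concat] at hlen
      omega
  -- distances to root of adjacent vertices differ by exactly one
  have hL1 : ∀ a b : V, T.Adj a b →
      T.dist r b = T.dist r a + 1 ∨ T.dist r a = T.dist r b + 1 := by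
    intro a b hab
    have h1 : T.dist r b ≤ T.dist r a + T.dist a b := hT.isConnected.dist_triangle
    have h2 : T.dist r a ≤ T.dist r b + T.dist b a := hT.isConnected.dist_triangle
    have h3 : T.dist a b = 1 := dist_eq_one_iff_adj.mpr hab
    have h4 : T.dist b a = 1 := dist_eq_one_iff_adj.mpr hab.symm
    have h5 := hA a b hab
    omega
  -- (B) uniqueness of parents
  have hB : ∀ u u' v : V, T.Adj u v → T.Adj u' v → T.dist r u + 1 = T.dist r v →
      T.dist r u' + 1 = T.dist r v → u = u' := by
    intro u u' v h1 h2 e1 e2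
    obtain ⟨p, hp, hlp⟩ := hT.isConnected.exists_path_of_dist r u
    obtain ⟨p', hp', hlp'⟩ := hT.isConnected.exists_path_of_dist r u'
    have hw : (p.concat h1).IsPath :=
      Walk.isPath_of_length_eq_dist _ (by rw [Walk.length_concat]; omega)
    have hw' : (p'.concat h2).IsPath :=
      Walk.isPath_of_length_eq_dist _ (by rw [Walk.length_concat]; omega)
    have heq : p.concat h1 = p'.concat h2 := (hT.existsUnique_path r v).unique hw hw'
    obtain ⟨hv, -⟩ := Walk.concat_inj heq
    exact hv
  -- the center function
  have hcomm : ∀ a b : V,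
      (if T.dist r a < T.dist r b then a else if T.dist r b < T.dist r a then b else r)
      = (if T.dist r b < T.dist r a then b else if T.dist r a < T.dist r b then a else r) := by
    intro a b
    rcases lt_trichotomy (T.dist r a) (T.dist r b) with h | h | h
    · simp [h, asymm h]
    · simp [h]
    · simp [h, asymm h]
  set F : Sym2 V → V := Sym2.lift ⟨fun a b =>
    if T.dist r a < T.dist r b then a else if T.dist r b < T.dist r a then b else r,
    hcomm⟩ with hF
  have hFmk : ∀ a b : V, F s(a, b) =
      if T.dist r a < T.dist r b then a else if T.dist r b < T.dist r a then b else r :=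
    fun a b => rfl
  -- each edge decomposes as (parent, child)
  have hC : ∀ e ∈ T.edgeSet, ∃ u w : V, e = s(u, w) ∧ T.Adj u w ∧ F e = u ∧
      T.dist r w = T.dist r u + 1 := by
    intro e he
    revert he
    induction e using Sym2.ind with
    | _ a b =>
      intro he
      rw [mem_edgeSet] at he
      rcases hL1 a b he with h | h
      · exact ⟨a, b, rfl, he, by rw [hFmk, if_pos (by omega)], h⟩
      · refine ⟨b, a, Sym2.eq_swap, he.symm, ?_, h⟩
        rw [hFmk, if_neg (by omega), if_pos (by omega)]
  -- helper lemmas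
  have hgap : ∀ x y : V, (T.dist r x + 2 ≤ T.dist r y ∨ T.dist r y + 2 ≤ T.dist r x) →
      x ≠ y ∧ ¬ T.Adj x y := by
    intro x y h
    constructor
    · rintro rfl; omega
    · intro hadj; rcases hL1 x y hadj with h' | h' <;> omega
  open Fin.NatCast in refine ⟨fun e => ((T.dist r (F e) : ℕ) : Fin 3), F, ?_, ?_⟩
  · intro e he
    obtain ⟨u, w, rfl, hadj, hcen, hdw⟩ := hC e he
    rw [hcen]
    exact Sym2.mem_mk_left u w
  · intro e he f hf hef hcf
    obtain ⟨u, w, he2, hadj, hcen, hdw⟩ := hC e he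
    obtain ⟨u', w', hf2, hadj', hcen', hdw'⟩ := hC f hf
    have hmod : T.dist r u % 3 = T.dist r u' % 3 := by
      have h := congrArg Fin.val hcf
      rwa [Fin.val_natCast, Fin.val_natCast, hcen, hcen'] at h
    by_cases huu : u = u'
    · left; rw [hcen, hcen', huu]
    · right
      intro a ha b hb
      rw [he2, Sym2.mem_iff] at ha
      rw [hf2, Sym2.mem_iff] at hb
      by_cases heqd : T.dist r u = T.dist r u'
      · rcases ha with rfl | rfl <;> rcases hb with rfl | rfl
        · exact ⟨huu, fun h => hA a b h heqd⟩
        · constructor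
          · intro hxy; rw [hxy] at heqd; omega
          · intro h
            rcases hL1 a b h with h' | h'
            · exact huu (hB a u' b h hadj' h'.symm hdw'.symm)
            · omega
        · constructor
          · intro hxy; rw [hxy] at hdw; omega
          · intro h
            rcases hL1 a b h with h' | h'
            · omega
            · exact huu (hB u b a hadj h.symm hdw.symm h'.symm)
        · constructor
          · intro hxy
            rw [hxy] at hadj hdw
            exact huu (hB u u' b hadj hadj' hdw.symm hdw'.symm)
          · intro h; exact hA a b h (by omega)
      · have hgap3 : T.dist r u + 3 ≤ T.dist r u' ∨ T.dist r u' + 3 ≤ T.dist r u := by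
          omega
        rcases ha with rfl | rfl <;> rcases hb with rfl | rfl <;>
          exact hgap _ _ (by omega)
end

section
/- Let G be a graph, P a partition of V(G), and M an induced matching of G all of whose edges go between pairs of parts joined by red edges of G/P. Suppose the red edges used by M form a single color class E_h of a distance-2-edge-coloring of the red graph of G/P, and for each red edge e = P_iP_j ∈ E_h let S'_e be an induced matching of G[P_i ∪ P_j] all of whose edges have one endpoint in P_i and one in P_j. If I' is a set of edges of E_h forming an induced matching in the black-edge-augmented quotient (i.e., no two edges of I' share a part and no black edge of G/P joins parts of distinct edges of I'), then ⋃_{e ∈ I'} S'_e is an induced matching of G. -/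
/-- If I' is a set of red part-pairs forming a color class of a
distance-2-edge-coloring of the red graph of G/P, such that moreover no black edge of
G/P joins parts of distinct pairs of I' (I' is an induced matching in the
black-edge-augmented quotient), and S'_e is an induced matching of G[P_i ∪ P_j] with all
edges between P_i and P_j for each e = (P_i, P_j) ∈ I', then ⋃_{e ∈ I'} S'_e is an
induced matching of G. -/
theorem stmt15 {V ι : Type*} [DecidableEq V] (G : SimpleGraph V) (P : V → ι)
    (I' : Finset (ι × ι))
    -- every pair of I' is a red edge of G/P
    (hred : ∀ p ∈ I', p.1 ≠ p.2 ∧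
      (∃ u v : V, P u = p.1 ∧ P v = p.2 ∧ G.Adj u v) ∧
      (∃ u v : V, P u = p.1 ∧ P v = p.2 ∧ ¬ G.Adj u v))
    -- distinct pairs of I' share no part, no red edge and no black edge of G/P joins them
    (hsep : ∀ p ∈ I', ∀ q ∈ I', p ≠ q →
      ∀ i ∈ ({p.1, p.2} : Set ι), ∀ j ∈ ({q.1, q.2} : Set ι),
        i ≠ j ∧
        ¬ (∀ u v : V, P u = i → P v = j → G.Adj u v) ∧
        ¬ ((∃ u v : V, P u = i ∧ P v = j ∧ G.Adj u v) ∧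
           (∃ u v : V, P u = i ∧ P v = j ∧ ¬ G.Adj u v)))
    (S : ι × ι → Finset (Sym2 V))
    (hS : ∀ p ∈ I', IsInducedMatching G (S p) ∧
      ∀ e ∈ S p, ∃ a b : V, e = s(a, b) ∧ P a = p.1 ∧ P b = p.2) :
    IsInducedMatching G (I'.biUnion S) := by
  constructor
  · intro e he
    obtain ⟨p, hp, hep⟩ := Finset.mem_biUnion.mp he
    exact (hS p hp).1.1 e hep
  · intro e he f hf hef a ha b hb
    obtain ⟨p, hp, hep⟩ := Finset.mem_biUnion.mp he
    obtain ⟨q, hq, hfq⟩ := Finset.mem_biUnion.mp hf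
    by_cases hpq : p = q
    · subst hpq
      exact (hS p hp).1.2 e hep f hfq hef a ha b hb
    · -- P a ∈ {p.1, p.2}, P b ∈ {q.1, q.2}
      have hPa : P a ∈ ({p.1, p.2} : Set ι) := by
        obtain ⟨x, y, hxy, hx, hy⟩ := (hS p hp).2 e hep
        subst hxy
        rcases Sym2.mem_iff.mp ha with h | h <;> subst h
        · exact Or.inl hx
        · exact Or.inr hy
      have hPb : P b ∈ ({q.1, q.2} : Set ι) := by
        obtain ⟨x, y, hxy, hx, hy⟩ := (hS q hq).2 f hfq
        subst hxy
        rcases Sym2.mem_iff.mp hb with h | h <;> subst h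
        · exact Or.inl hx
        · exact Or.inr hy
      obtain ⟨hne, hnotfull, hnotred⟩ := hsep p hp q hq hpq (P a) hPa (P b) hPb
      have hnoadj : ¬ G.Adj a b := by
        intro hadj
        have hex_non : ∃ u v : V, P u = P a ∧ P v = P b ∧ ¬ G.Adj u v := by
          by_contra hcon
          push_neg at hcon
          exact hnotfull fun u v hu hv => hcon u v hu hv
        exact hnotred ⟨⟨a, b, rfl, rfl, hadj⟩, hex_non⟩
      refine ⟨fun h => hne (by rw [h]), hnoadj⟩
end

section
/- Let G be an n-vertex graph obtained from the Halldórsson reduction applied to a 3-CNF formula φ with N variables and M clauses and parameter r: a triangle {d_i, t_i, f_i} for each variable x_i, an independent set I_j of size r for each clause C_j, with t_i joined to all of I_j when x_i occurs positively in C_j and f_i joined to all of I_j when x_i occurs negatively in C_j. Then: (1) if φ is satisfiable, G has an independent dominating set of size N; (2) if φ is unsatisfiable, every independent dominating set of G has size at least r. -/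
/-- The Halldórsson reduction graph: a triangle {d_i, t_i, f_i} (coded (i,0), (i,1), (i,2))
per variable x_i, an independent set I_j of size r per clause C_j, with t_i joined to all
of I_j when x_i occurs positively in C_j and f_i joined to all of I_j when x_i occurs
negatively in C_j. -/
def halldorsson (N M r : ℕ) (Cl : Fin M → Finset (Fin N × Bool)) :
    SimpleGraph ((Fin N × Fin 3) ⊕ (Fin M × Fin r)) :=
  SimpleGraph.fromRel (fun x y =>
    match x, y with
    | Sum.inl (i, a), Sum.inl (i', a') => i = i' ∧ a ≠ a'
    | Sum.inl (i, a), Sum.inr (j, _) =>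
        ((a : ℕ) = 1 ∧ (i, true) ∈ Cl j) ∨ ((a : ℕ) = 2 ∧ (i, false) ∈ Cl j)
    | Sum.inr (j, _), Sum.inl (i, a) =>
        ((a : ℕ) = 1 ∧ (i, true) ∈ Cl j) ∨ ((a : ℕ) = 2 ∧ (i, false) ∈ Cl j)
    | Sum.inr _, Sum.inr _ => False)

lemma hall_adj_ll (N M r : ℕ) (Cl : Fin M → Finset (Fin N × Bool)) (i i' : Fin N) (a a' : Fin 3) :
    (halldorsson N M r Cl).Adj (Sum.inl (i,a)) (Sum.inl (i',a')) ↔ i = i' ∧ a ≠ a' := by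
  rw [halldorsson, SimpleGraph.fromRel_adj]
  constructor
  · rintro ⟨h1, h2 | h2⟩
    · exact h2
    · exact ⟨h2.1.symm, h2.2.symm⟩
  · rintro ⟨rfl, h2⟩
    exact ⟨fun h => h2 (congrArg Prod.snd (Sum.inl.inj h)), Or.inl ⟨rfl, h2⟩⟩

lemma hall_adj_lr (N M r : ℕ) (Cl : Fin M → Finset (Fin N × Bool)) (i : Fin N) (a : Fin 3) (j : Fin M) (k : Fin r) :
    (halldorsson N M r Cl).Adj (Sum.inl (i,a)) (Sum.inr (j,k)) ↔
      (((a : ℕ) = 1 ∧ (i, true) ∈ Cl j) ∨ ((a : ℕ) = 2 ∧ (i, false) ∈ Cl j)) := by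
  rw [halldorsson, SimpleGraph.fromRel_adj]
  simp

lemma hall_not_adj_rr (N M r : ℕ) (Cl : Fin M → Finset (Fin N × Bool)) (j j' : Fin M) (k k' : Fin r) :
    ¬ (halldorsson N M r Cl).Adj (Sum.inr (j,k)) (Sum.inr (j',k')) := by
  rw [halldorsson, SimpleGraph.fromRel_adj]
  simp

/-- (1) if the 3-CNF formula is satisfiable, the reduction graph has an
independent dominating set of size N; (2) if it is unsatisfiable, every independent
dominating set has size at least r. -/
theorem stmt16 (N M r : ℕ) (Cl : Fin M → Finset (Fin N × Bool))
    (hCl : ∀ j, (Cl j).card ≤ 3) :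
    ((∃ σ : Fin N → Bool, ∀ j, ∃ l ∈ Cl j, σ l.1 = l.2) →
      ∃ S : Finset ((Fin N × Fin 3) ⊕ (Fin M × Fin r)),
        (∀ u ∈ S, ∀ v ∈ S, ¬ (halldorsson N M r Cl).Adj u v) ∧
        (∀ v, v ∈ S ∨ ∃ u ∈ S, (halldorsson N M r Cl).Adj u v) ∧
        S.card = N) ∧
    ((¬ ∃ σ : Fin N → Bool, ∀ j, ∃ l ∈ Cl j, σ l.1 = l.2) →
      ∀ S : Finset ((Fin N × Fin 3) ⊕ (Fin M × Fin r)),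
        (∀ u ∈ S, ∀ v ∈ S, ¬ (halldorsson N M r Cl).Adj u v) →
        (∀ v, v ∈ S ∨ ∃ u ∈ S, (halldorsson N M r Cl).Adj u v) →
        r ≤ S.card) := by
  constructor
  · -- satisfiable case
    rintro ⟨σ, hσ⟩
    set pick : Fin N → Fin 3 := fun i => if σ i then 1 else 2 with hpick
    refine ⟨Finset.univ.image (fun i => Sum.inl (i, pick i)), ?_, ?_, ?_⟩
    · rintro u hu v hv hadj
      simp only [Finset.mem_image, Finset.mem_univ, true_and] at hu hv
      obtain ⟨i, rfl⟩ := hu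
      obtain ⟨i', rfl⟩ := hv
      rw [hall_adj_ll] at hadj
      obtain ⟨rfl, hne⟩ := hadj
      exact hne rfl
    · rintro (⟨i, a⟩ | ⟨j, k⟩)
      · by_cases h : a = pick i
        · subst h
          exact Or.inl (Finset.mem_image.2 ⟨i, Finset.mem_univ i, rfl⟩)
        · refine Or.inr ⟨Sum.inl (i, pick i), Finset.mem_image.2 ⟨i, Finset.mem_univ i, rfl⟩, ?_⟩
          rw [hall_adj_ll]
          exact ⟨rfl, fun h' => h h'.symm⟩
      · obtain ⟨⟨i, b⟩, hl, hsat⟩ := hσ j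
        refine Or.inr ⟨Sum.inl (i, pick i), Finset.mem_image.2 ⟨i, Finset.mem_univ i, rfl⟩, ?_⟩
        rw [hall_adj_lr]
        simp only at hsat
        cases b with
        | true => left; refine ⟨?_, hsat ▸ hl⟩; simp [hpick, hsat]
        | false => right; refine ⟨?_, hsat ▸ hl⟩; simp [hpick, hsat]
    · rw [Finset.card_image_of_injective _ (fun i i' h => congrArg Prod.fst (Sum.inl.inj h)),
        Finset.card_univ, Fintype.card_fin]
  · -- unsatisfiable case
    intro hunsat S hind hdom
    set σ : Fin N → Bool := fun i => decide (Sum.inl (i, (1 : Fin 3)) ∈ S) with hσdef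
    have hj : ∃ j : Fin M, ∀ l ∈ Cl j, σ l.1 ≠ l.2 := by
      by_contra h
      push_neg at h
      exact hunsat ⟨σ, h⟩
    obtain ⟨j, hj⟩ := hj
    have hall : ∀ k : Fin r, Sum.inr (j, k) ∈ S := by
      intro k
      rcases hdom (Sum.inr (j, k)) with h | ⟨u, hu, hadj⟩
      · exact h
      · exfalso
        rcases u with ⟨i, a⟩ | ⟨j', k'⟩
        · rw [hall_adj_lr] at hadj
          rcases hadj with ⟨ha, hmem⟩ | ⟨ha, hmem⟩
          · have ha' : a = (1 : Fin 3) := Fin.ext (by simpa using ha)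
            subst ha'
            have : σ i = true := by simp [hσdef, hu]
            exact hj (i, true) hmem this
          · have ha' : a = (2 : Fin 3) := Fin.ext (by simpa using ha)
            subst ha'
            have h1 : Sum.inl (i, (1 : Fin 3)) ∉ S := by
              intro h1
              exact hind _ hu _ h1 ((hall_adj_ll N M r Cl i i 2 1).2 ⟨rfl, by decide⟩)
            have : σ i = false := by simp [hσdef, h1]
            exact hj (i, false) hmem this
        · exact hall_not_adj_rr N M r Cl j' j k' k hadj
    calc r = (Finset.univ.image (fun k : Fin r => (Sum.inr (j, k) : (Fin N × Fin 3) ⊕ (Fin M × Fin r)))).card := by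
              rw [Finset.card_image_of_injective _ (fun k k' h => congrArg Prod.snd (Sum.inr.inj h)), Finset.card_univ, Fintype.card_fin]
         _ ≤ S.card := Finset.card_le_card (fun v hv => by
              obtain ⟨k, _, rfl⟩ := Finset.mem_image.1 hv
              exact hall k)
end
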